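/- arXiv:1209.1135 — 4 statements merged into one kernel-verified Lean document; each statement's English description precedes it below -/
import Mathlib

section
/- The pair (A, R) is a quasi-triangular Hopf algebra. Explicitly: (1) R is an invertible element of A ⊗ A; (2) for every a ∈ A one has (P ∘ Δ)(a) = R·Δ(a)·R⁻¹, where P : A ⊗ A → A ⊗ A is the flip x ⊗ y ↦ y ⊗ x; (3) (id ⊗ Δ)(R) = R₁₃·R₁₂; and (4) (Δ ⊗ id)(R) = R₁₃·R₂₃; where in A ⊗ A ⊗ A one sets R₁₂ = R ⊗ 1, R₂₃ = 1 ⊗ R, and R₁₃ = (1/(2N)) Σ_{j,k ∈ ℤ_{2N}} t^{−jk} K^j ⊗ 1 ⊗ K^k. -/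
open Finset TensorProduct

noncomputable section

/-- The quantum group `U_t(u(1)) = ℂ[ℤ_{2N}]`, the complex group algebra of the cyclic group
`ℤ_{2N}`. -/
abbrev QG (N : ℕ) := MonoidAlgebra ℂ (Multiplicative (ZMod (2 * N)))

/-- The basis element `K^j`, `j ∈ ℤ_{2N}` (`K` is the image of the fixed generator `1`). -/
def KK (N : ℕ) (j : ZMod (2 * N)) : QG N :=
  MonoidAlgebra.single (Multiplicative.ofAdd j) 1

/-- `t = exp(πi/N)`, a primitive `2N`-th root of unity. -/
def tq (N : ℕ) : ℂ := Complex.exp ((Real.pi : ℂ) * Complex.I / N)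

/-- The universal `R`-matrix `R = (1/2N) Σ_{j,k ∈ ℤ_{2N}} t^{−jk} K^j ⊗ K^k`. -/
def Rmat (N : ℕ) : QG N ⊗[ℂ] QG N :=
  (2 * (N : ℂ))⁻¹ • ∑ j ∈ Finset.range (2 * N), ∑ k ∈ Finset.range (2 * N),
    tq N ^ (-((j : ℤ) * (k : ℤ))) • (KK N (j : ZMod (2 * N)) ⊗ₜ[ℂ] KK N (k : ZMod (2 * N)))

/-- The comultiplication `Δ : A → A ⊗ A`, `Δ(K^j) = K^j ⊗ K^j`. -/
def DeltaQG (N : ℕ) : QG N →ₐ[ℂ] QG N ⊗[ℂ] QG N :=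
  (MonoidAlgebra.lift ℂ (QG N ⊗[ℂ] QG N) (Multiplicative (ZMod (2 * N))))
    { toFun := fun x => MonoidAlgebra.single x 1 ⊗ₜ[ℂ] MonoidAlgebra.single x 1
      map_one' := by
        simp [MonoidAlgebra.one_def, Algebra.TensorProduct.one_def]
      map_mul' := fun x y => by
        simp only [Algebra.TensorProduct.tmul_mul_tmul, MonoidAlgebra.single_mul_single,
          one_mul] }

/-- The antipode `S : A → A`, `S(K^j) = K^{−j}`. -/
def SQG (N : ℕ) : QG N →ₐ[ℂ] QG N :=
  (MonoidAlgebra.lift ℂ (QG N) (Multiplicative (ZMod (2 * N))))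
    { toFun := fun x => MonoidAlgebra.single x⁻¹ 1
      map_one' := by simp [MonoidAlgebra.one_def]
      map_mul' := fun x y => by
        simp only [mul_inv, MonoidAlgebra.single_mul_single, one_mul] }

/-- `R₁₂ = Σ c_{jk} K^j ⊗ K^k ⊗ 1` in `A ⊗ (A ⊗ A)`. -/
def R12r (N : ℕ) : QG N ⊗[ℂ] (QG N ⊗[ℂ] QG N) :=
  (2 * (N : ℂ))⁻¹ • ∑ j ∈ Finset.range (2 * N), ∑ k ∈ Finset.range (2 * N),
    tq N ^ (-((j : ℤ) * (k : ℤ))) •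
      (KK N (j : ZMod (2 * N)) ⊗ₜ[ℂ] (KK N (k : ZMod (2 * N)) ⊗ₜ[ℂ] (1 : QG N)))

/-- `R₁₃ = (1/2N) Σ_{j,k} t^{−jk} K^j ⊗ 1 ⊗ K^k` in `A ⊗ (A ⊗ A)`. -/
def R13r (N : ℕ) : QG N ⊗[ℂ] (QG N ⊗[ℂ] QG N) :=
  (2 * (N : ℂ))⁻¹ • ∑ j ∈ Finset.range (2 * N), ∑ k ∈ Finset.range (2 * N),
    tq N ^ (-((j : ℤ) * (k : ℤ))) •
      (KK N (j : ZMod (2 * N)) ⊗ₜ[ℂ] ((1 : QG N) ⊗ₜ[ℂ] KK N (k : ZMod (2 * N))))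

/-- `R₁₃ = (1/2N) Σ_{j,k} t^{−jk} K^j ⊗ 1 ⊗ K^k` in `(A ⊗ A) ⊗ A`. -/
def R13l (N : ℕ) : (QG N ⊗[ℂ] QG N) ⊗[ℂ] QG N :=
  (2 * (N : ℂ))⁻¹ • ∑ j ∈ Finset.range (2 * N), ∑ k ∈ Finset.range (2 * N),
    tq N ^ (-((j : ℤ) * (k : ℤ))) •
      ((KK N (j : ZMod (2 * N)) ⊗ₜ[ℂ] (1 : QG N)) ⊗ₜ[ℂ] KK N (k : ZMod (2 * N)))

/-- `R₂₃ = 1 ⊗ Σ c_{jk} K^j ⊗ K^k` in `(A ⊗ A) ⊗ A`. -/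
def R23l (N : ℕ) : (QG N ⊗[ℂ] QG N) ⊗[ℂ] QG N :=
  (2 * (N : ℂ))⁻¹ • ∑ j ∈ Finset.range (2 * N), ∑ k ∈ Finset.range (2 * N),
    tq N ^ (-((j : ℤ) * (k : ℤ))) •
      (((1 : QG N) ⊗ₜ[ℂ] KK N (j : ZMod (2 * N))) ⊗ₜ[ℂ] KK N (k : ZMod (2 * N)))

/-! With `ψ = ZMod.stdAddChar`, so that `t^m = ψ(m)`, the elements
`e_k = (1/2N) Σ_j ψ(-jk) K^j` form a complete family of orthogonal idempotents (character
orthogonality), and `R = Σ_k e_k ⊗ K^k = Σ_j K^j ⊗ e_j`; the legs `R₁₂, R₁₃, R₂₃` have the same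
two expansions. Multiplying such sums collapses them to the diagonal, so `Σ_k e_k ⊗ K^{-k}`
inverts `R` and both sides of each hexagon identity equal `Σ_k e_k ⊗ K^k ⊗ K^k`, resp.
`Σ_j K^j ⊗ K^j ⊗ e_j`. Since `A ⊗ A` is commutative and `Δ` is cocommutative,
`R Δ(a) R⁻¹ = Δ(a) = P Δ(a)`.
-/

section OrthogonalIdempotents

variable {R A B ι : Type*} [CommSemiring R] [Semiring A] [Algebra R A] [Semiring B] [Algebra R B]
  [Fintype ι] {e : ι → A}

theorem OrthogonalIdempotents.sum_tmul_mul_sum_tmul_left (he : OrthogonalIdempotents e)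
    (x y : ι → B) :
    (∑ i, e i ⊗ₜ[R] x i) * (∑ i, e i ⊗ₜ[R] y i) = ∑ i, e i ⊗ₜ[R] (x i * y i) := by
  classical
  simp only [sum_mul_sum, Algebra.TensorProduct.tmul_mul_tmul, he.mul_eq, ite_tmul,
    sum_ite_eq, mem_univ, if_true]

theorem OrthogonalIdempotents.sum_tmul_mul_sum_tmul_right (he : OrthogonalIdempotents e)
    (x y : ι → B) :
    (∑ i, x i ⊗ₜ[R] e i) * (∑ i, y i ⊗ₜ[R] e i) = ∑ i, (x i * y i) ⊗ₜ[R] e i := by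
  classical
  simp only [sum_mul_sum, Algebra.TensorProduct.tmul_mul_tmul, he.mul_eq, tmul_ite,
    sum_ite_eq, mem_univ, if_true]

end OrthogonalIdempotents

namespace CyclicGroupAlgebra

open ZMod (stdAddChar)

variable {n : ℕ} [NeZero n]

abbrev K (j : ZMod n) : MonoidAlgebra ℂ (Multiplicative (ZMod n)) :=
  MonoidAlgebra.single (Multiplicative.ofAdd j) 1

def e (k : ZMod n) : MonoidAlgebra ℂ (Multiplicative (ZMod n)) :=
  (n : ℂ)⁻¹ • ∑ j, stdAddChar (-(j * k)) • K j

omit [NeZero n] in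
lemma K_mul_K (i j : ZMod n) : K i * K j = K (i + j) := by
  simp [MonoidAlgebra.single_mul_single, ← ofAdd_add]

omit [NeZero n] in
lemma K_zero : K (0 : ZMod n) = 1 := rfl

lemma sum_stdAddChar_mul (a : ZMod n) :
    ∑ j, stdAddChar (j * a) = if a = 0 then (n : ℂ) else 0 := by
  rw [AddChar.sum_mulShift a (ZMod.isPrimitive_stdAddChar n), ZMod.card, Nat.cast_ite,
    Nat.cast_zero]

lemma K_mul_e (j k : ZMod n) : K j * e k = stdAddChar (j * k) • e k := by
  simp only [e, mul_smul_comm, mul_sum, K_mul_K, smul_sum, smul_comm _ (n : ℂ)⁻¹]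
  refine Fintype.sum_equiv (Equiv.addLeft j) _ _ fun i => ?_
  rw [Equiv.coe_addLeft, smul_smul (stdAddChar _), ← AddChar.map_add_eq_mul,
    show j * k + -((j + i) * k) = -(i * k) by ring]

lemma e_mul_e (k l : ZMod n) : e k * e l = if k = l then e k else 0 := by
  have hsum : ∑ j : ZMod n, stdAddChar (-(j * k)) * stdAddChar (j * l) =
      ∑ j, stdAddChar (j * (l - k)) := by
    refine sum_congr rfl fun j _ => ?_
    rw [← AddChar.map_add_eq_mul]
    ring_nf
  conv_lhs => rw [e, smul_mul_assoc, sum_mul]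
  simp only [smul_mul_assoc, K_mul_e, smul_smul, ← sum_smul, hsum, sum_stdAddChar_mul,
    sub_eq_zero]
  rcases eq_or_ne k l with rfl | h
  · simp [NeZero.ne]
  · simp [h, h.symm]

lemma sum_e : ∑ k : ZMod n, e k = 1 := by
  have hsum (j : ZMod n) : ∑ k, stdAddChar (-(j * k)) = if j = 0 then (n : ℂ) else 0 := by
    simp only [← mul_neg, mul_comm j, sum_stdAddChar_mul, neg_eq_zero]
  simp only [e, ← smul_sum]
  rw [sum_comm]
  simp only [← sum_smul, hsum, ite_smul, zero_smul, sum_ite_eq', mem_univ, if_true, smul_smul,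
    inv_mul_cancel₀ (NeZero.ne (n : ℂ)), one_smul, K_zero]

lemma completeOrthogonalIdempotents_e : CompleteOrthogonalIdempotents (e (n := n)) :=
  ⟨OrthogonalIdempotents.iff_mul_eq.mpr e_mul_e, sum_e⟩

variable {M : Type*} [AddCommMonoid M] [Module ℂ M]

/-- The common shape of `R` and of its legs `R₁₂`, `R₁₃`, `R₂₃`: the kernel `ψ(-jk)/n` paired
through a bilinear placement `T` of `K^j` and `K^k`. -/
def rSum (T : MonoidAlgebra ℂ (Multiplicative (ZMod n)) →ₗ[ℂ]
    MonoidAlgebra ℂ (Multiplicative (ZMod n)) →ₗ[ℂ] M) : M :=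
  (n : ℂ)⁻¹ • ∑ j, ∑ k, stdAddChar (-(j * k)) • T (K j) (K k)

lemma rSum_eq_sum_e_left (T : MonoidAlgebra ℂ (Multiplicative (ZMod n)) →ₗ[ℂ]
    MonoidAlgebra ℂ (Multiplicative (ZMod n)) →ₗ[ℂ] M) :
    rSum T = ∑ k, T (e k) (K k) := by
  simp only [rSum, e, map_smul, map_sum, LinearMap.smul_apply, LinearMap.sum_apply, smul_sum]
  exact sum_comm

lemma rSum_eq_sum_e_right (T : MonoidAlgebra ℂ (Multiplicative (ZMod n)) →ₗ[ℂ]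
    MonoidAlgebra ℂ (Multiplicative (ZMod n)) →ₗ[ℂ] M) :
    rSum T = ∑ j, T (K j) (e j) := by
  simp only [rSum, e, map_smul, map_sum, smul_sum, mul_comm _ (_ : ZMod n)]

end CyclicGroupAlgebra

open CyclicGroupAlgebra ZMod

lemma sum_range_eq_sum_zmod {M : Type*} [AddCommMonoid M] (n : ℕ) [NeZero n] (f : ZMod n → M) :
    ∑ j ∈ range n, f j = ∑ j : ZMod n, f j := by
  refine sum_nbij' (fun j => (j : ZMod n)) (fun a => a.val) ?_ ?_ ?_ ?_ ?_ <;>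
    simp +contextual [ZMod.val_lt, ZMod.val_natCast, Nat.mod_eq_of_lt]

variable (N : ℕ) [NeZero N]

lemma tq_zpow_eq_stdAddChar (m : ℤ) : tq N ^ m = stdAddChar (m : ZMod (2 * N)) := by
  rw [stdAddChar_coe, tq, ← Complex.exp_int_mul]
  congr 1
  push_cast
  ring

lemma inv_smul_sum_range_eq_rSum {M : Type*} [AddCommMonoid M] [Module ℂ M]
    (T : QG N →ₗ[ℂ] QG N →ₗ[ℂ] M) :
    (2 * (N : ℂ))⁻¹ • ∑ j ∈ range (2 * N), ∑ k ∈ range (2 * N),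
      tq N ^ (-((j : ℤ) * (k : ℤ))) • T (KK N (j : ZMod (2 * N))) (KK N (k : ZMod (2 * N))) =
      rSum T := by
  simp only [tq_zpow_eq_stdAddChar, rSum, ← sum_range_eq_sum_zmod (2 * N)]
  push_cast
  rfl

lemma Rmat_eq_sum_e_tmul : Rmat N = ∑ k, e k ⊗ₜ[ℂ] K k :=
  (inv_smul_sum_range_eq_rSum N (TensorProduct.mk ℂ _ _)).trans (rSum_eq_sum_e_left _)

lemma Rmat_eq_sum_tmul_e : Rmat N = ∑ j, K j ⊗ₜ[ℂ] e j :=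
  (inv_smul_sum_range_eq_rSum N (TensorProduct.mk ℂ _ _)).trans (rSum_eq_sum_e_right _)

lemma R12r_eq_sum_e_tmul : R12r N = ∑ k, e k ⊗ₜ[ℂ] (K k ⊗ₜ[ℂ] (1 : QG N)) :=
  (inv_smul_sum_range_eq_rSum N
    ((TensorProduct.mk ℂ _ _).compl₂ ((TensorProduct.mk ℂ (QG N) (QG N)).flip 1))).trans
    (rSum_eq_sum_e_left _)

lemma R13r_eq_sum_e_tmul : R13r N = ∑ k, e k ⊗ₜ[ℂ] ((1 : QG N) ⊗ₜ[ℂ] K k) :=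
  (inv_smul_sum_range_eq_rSum N
    ((TensorProduct.mk ℂ _ _).compl₂ (TensorProduct.mk ℂ (QG N) (QG N) 1))).trans
    (rSum_eq_sum_e_left _)

lemma R13l_eq_sum_tmul_e : R13l N = ∑ j, (K j ⊗ₜ[ℂ] (1 : QG N)) ⊗ₜ[ℂ] e j :=
  (inv_smul_sum_range_eq_rSum N
    ((TensorProduct.mk ℂ _ _).comp ((TensorProduct.mk ℂ (QG N) (QG N)).flip 1))).trans
    (rSum_eq_sum_e_right _)

lemma R23l_eq_sum_tmul_e : R23l N = ∑ j, ((1 : QG N) ⊗ₜ[ℂ] K j) ⊗ₜ[ℂ] e j :=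
  (inv_smul_sum_range_eq_rSum N
    ((TensorProduct.mk ℂ _ _).comp (TensorProduct.mk ℂ (QG N) (QG N) 1))).trans
    (rSum_eq_sum_e_right _)

omit [NeZero N] in
lemma DeltaQG_single (x : Multiplicative (ZMod (2 * N))) :
    DeltaQG N (MonoidAlgebra.single x 1) =
      MonoidAlgebra.single x 1 ⊗ₜ[ℂ] MonoidAlgebra.single x 1 := by
  rw [DeltaQG, MonoidAlgebra.lift_single, one_smul]
  rfl

omit [NeZero N] in
lemma comm_DeltaQG (a : QG N) :
    Algebra.TensorProduct.comm ℂ (QG N) (QG N) (DeltaQG N a) = DeltaQG N a := by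
  suffices (Algebra.TensorProduct.comm ℂ (QG N) (QG N)).toAlgHom.comp (DeltaQG N) = DeltaQG N from
    AlgHom.congr_fun this a
  refine MonoidAlgebra.algHom_ext (fun x => ?_) (Subsingleton.elim _ _)
  rw [AlgHom.comp_apply, DeltaQG_single]
  exact Algebra.TensorProduct.comm_tmul ℂ _ _

def RmatInv : QG N ⊗[ℂ] QG N := ∑ k, e k ⊗ₜ[ℂ] K (-k)

lemma Rmat_mul_RmatInv : Rmat N * RmatInv N = 1 := by
  rw [Rmat_eq_sum_e_tmul, RmatInv, completeOrthogonalIdempotents_e.sum_tmul_mul_sum_tmul_left]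
  simp only [K_mul_K, add_neg_cancel, K_zero, ← sum_tmul,
    completeOrthogonalIdempotents_e.complete, Algebra.TensorProduct.one_def]

lemma map_id_DeltaQG_Rmat :
    Algebra.TensorProduct.map (AlgHom.id ℂ (QG N)) (DeltaQG N) (Rmat N) = R13r N * R12r N := by
  rw [Rmat_eq_sum_e_tmul, R13r_eq_sum_e_tmul, R12r_eq_sum_e_tmul,
    completeOrthogonalIdempotents_e.sum_tmul_mul_sum_tmul_left]
  simp only [map_sum, Algebra.TensorProduct.map_tmul, AlgHom.id_apply, DeltaQG_single,
    Algebra.TensorProduct.tmul_mul_tmul, one_mul, mul_one]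

lemma map_DeltaQG_id_Rmat :
    Algebra.TensorProduct.map (DeltaQG N) (AlgHom.id ℂ (QG N)) (Rmat N) = R13l N * R23l N := by
  rw [Rmat_eq_sum_tmul_e, R13l_eq_sum_tmul_e, R23l_eq_sum_tmul_e,
    completeOrthogonalIdempotents_e.sum_tmul_mul_sum_tmul_right]
  simp only [map_sum, Algebra.TensorProduct.map_tmul, AlgHom.id_apply, DeltaQG_single,
    Algebra.TensorProduct.tmul_mul_tmul, one_mul, mul_one]

theorem stmt_0_general (N : ℕ) (hpos : 0 < N) :
    ∃ Rinv : QG N ⊗[ℂ] QG N,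
      Rmat N * Rinv = 1 ∧ Rinv * Rmat N = 1 ∧
      (∀ a : QG N,
        (Algebra.TensorProduct.comm ℂ (QG N) (QG N)) (DeltaQG N a)
          = Rmat N * DeltaQG N a * Rinv) ∧
      (Algebra.TensorProduct.map (AlgHom.id ℂ (QG N)) (DeltaQG N)) (Rmat N)
        = R13r N * R12r N ∧
      (Algebra.TensorProduct.map (DeltaQG N) (AlgHom.id ℂ (QG N))) (Rmat N)
        = R13l N * R23l N := by
  have : NeZero N := ⟨hpos.ne'⟩
  refine ⟨RmatInv N, Rmat_mul_RmatInv N, mul_comm (RmatInv N) (Rmat N) ▸ Rmat_mul_RmatInv N,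
    fun a => ?_, map_id_DeltaQG_Rmat N, map_DeltaQG_id_Rmat N⟩
  rw [comm_DeltaQG, mul_right_comm, Rmat_mul_RmatInv, one_mul]

/-- **`(A, R)` is a quasi-triangular Hopf algebra**: `R` is invertible, conjugation by `R`
turns `Δ` into `Δ_op = P ∘ Δ`, and the two hexagon identities
`(id ⊗ Δ)(R) = R₁₃·R₁₂` and `(Δ ⊗ id)(R) = R₁₃·R₂₃` hold. -/
theorem stmt_0 (N : ℕ) (hpos : 0 < N) (hN : Even N) :
    ∃ Rinv : QG N ⊗[ℂ] QG N,
      Rmat N * Rinv = 1 ∧ Rinv * Rmat N = 1 ∧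
      (∀ a : QG N,
        (Algebra.TensorProduct.comm ℂ (QG N) (QG N)) (DeltaQG N a)
          = Rmat N * DeltaQG N a * Rinv) ∧
      (Algebra.TensorProduct.map (AlgHom.id ℂ (QG N)) (DeltaQG N)) (Rmat N)
        = R13r N * R12r N ∧
      (Algebra.TensorProduct.map (DeltaQG N) (AlgHom.id ℂ (QG N))) (Rmat N)
        = R13l N * R23l N :=
  stmt_0_general N hpos
end
end

section
/- In A one has the identity v = (1/N)·(Σ_{k=0}^{N−1} (−1)^k t^{k²})·(Σ_{j=0}^{N−1} (−1)^j t^{−j²} K^{2j+N}). -/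
/-! Since `t ^ N = -1` with `N` even, the substitution `k ↦ k + N` multiplies `t ^ ((k + j) * k)`
by `(-1) ^ j`. Hence the coefficient of `K ^ j` in `v` vanishes for odd `j`, while for `j = 2m`
completing the square turns it into `t ^ (-m²)` times the Gauss sum `Σ_{k < 2N} t ^ (k²)`.
The function `k ↦ t ^ (k²)` has period `N`, and the half-period shift `k ↦ k + N/2` multiplies
`t ^ (k²)` by `t ^ ((N/2)²) (-1) ^ k`; the same shift applied to `m` reindexes `K ^ (2m)` as
`K ^ (2j + N)`. -/

open Finset TensorProduct

noncomputable section

/-- The universal twist `v = (1/2N) Σ_{j,k ∈ ℤ_{2N}} t^{(k+j)k} K^j`. -/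
def vel (N : ℕ) : QG N :=
  (2 * (N : ℂ))⁻¹ • ∑ j ∈ Finset.range (2 * N), ∑ k ∈ Finset.range (2 * N),
    tq N ^ ((k + j) * k) • KK N (j : ZMod (2 * N))

theorem Function.Periodic.sum_range_add_right {M : Type*} [AddCommMonoid M] {f : ℕ → M} {n : ℕ}
    (hf : Function.Periodic f n) (s : ℕ) :
    ∑ k ∈ range n, f (k + s) = ∑ k ∈ range n, f k := by
  have h := congrArg (fun m => (m.map f).sum) (Nat.multiset_Ico_map_mod s n)
  simp only [Multiset.map_map, Function.comp_def, hf.map_mod_nat] at h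
  calc ∑ k ∈ range n, f (k + s) = ∑ k ∈ Ico s (s + n), f k := by
        rw [sum_Ico_eq_sum_range, Nat.add_sub_cancel_left]; simp only [add_comm]
    _ = ∑ k ∈ range n, f k := h

lemma sum_range_two_mul {M : Type*} [AddCommMonoid M] (f : ℕ → M) (n : ℕ) :
    ∑ k ∈ range (2 * n), f k = ∑ i ∈ range n, (f (2 * i) + f (2 * i + 1)) := by
  induction n with
  | zero => simp
  | succ n ih =>
    rw [show 2 * (n + 1) = 2 * n + 1 + 1 by ring, sum_range_succ, sum_range_succ, ih,
      sum_range_succ, add_assoc]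

lemma tq_pow_self {N : ℕ} (hN : N ≠ 0) : tq N ^ N = -1 := by
  rw [tq, ← Complex.exp_nat_mul, mul_div_cancel₀ _ (Nat.cast_ne_zero.2 hN)]
  exact Complex.exp_pi_mul_I

section PowEqNegOne

variable {R : Type*} [CommRing R] {t : R} {n : ℕ}

lemma pow_add_mul_add_of_pow_eq_neg_one (ht : t ^ n = -1) (hn : Even n) (j k : ℕ) :
    t ^ ((k + n + j) * (k + n)) = (-1) ^ j * t ^ ((k + j) * k) := by
  rw [show (k + n + j) * (k + n) = n * (2 * k + n + j) + (k + j) * k by ring, pow_add, pow_mul,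
    ht, pow_add, ((even_two_mul k).add hn).neg_one_pow, one_mul]

lemma periodic_pow_mul_self (ht : t ^ n = -1) (hn : Even n) :
    Function.Periodic (fun k : ℕ => t ^ (k * k)) n := fun k => by
  simpa using pow_add_mul_add_of_pow_eq_neg_one ht hn 0 k

lemma sum_range_two_mul_pow (ht : t ^ n = -1) (hn : Even n) (j : ℕ) :
    ∑ k ∈ range (2 * n), t ^ ((k + j) * k)
      = (1 + (-1) ^ j) * ∑ k ∈ range n, t ^ ((k + j) * k) := by
  rw [two_mul, sum_range_add, add_mul, one_mul, mul_sum]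
  congr 1
  refine sum_congr rfl fun k _ => ?_
  rw [add_comm n k, pow_add_mul_add_of_pow_eq_neg_one ht hn]

lemma pow_mul_sum_range_pow_add_two_mul (ht : t ^ n = -1) (hn : Even n) (m : ℕ) :
    t ^ (m * m) * ∑ k ∈ range n, t ^ ((k + 2 * m) * k) = ∑ k ∈ range n, t ^ (k * k) := by
  rw [mul_sum, ← (periodic_pow_mul_self ht hn).sum_range_add_right m]
  refine sum_congr rfl fun k _ => ?_
  rw [← pow_add]
  ring_nf

lemma pow_add_half_period_mul_self {M : ℕ} (ht : t ^ (M + M) = -1) (k : ℕ) :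
    t ^ ((k + M) * (k + M)) = t ^ (M * M) * ((-1) ^ k * t ^ (k ^ 2)) := by
  rw [← ht, ← pow_mul, ← pow_add, ← pow_add]
  ring_nf

lemma sum_range_pow_mul_self_eq_pow_mul_sum {M : ℕ} (ht : t ^ (M + M) = -1) :
    ∑ k ∈ range (M + M), t ^ (k * k)
      = t ^ (M * M) * ∑ k ∈ range (M + M), (-1) ^ k * t ^ (k ^ 2) := by
  rw [mul_sum, ← (periodic_pow_mul_self ht ⟨M, rfl⟩).sum_range_add_right M]
  exact sum_congr rfl fun k _ => pow_add_half_period_mul_self ht k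

end PowEqNegOne

lemma vel_eq_smul_sum_even {N : ℕ} (hN : N ≠ 0) (hev : Even N) :
    vel N = ((N : ℂ)⁻¹ * ∑ k ∈ range N, tq N ^ (k * k)) •
      ∑ m ∈ range N, (tq N ^ (m * m))⁻¹ • KK N ((2 * m : ℕ) : ZMod (2 * N)) := by
  have ht := tq_pow_self hN
  have ht0 : tq N ≠ 0 := Complex.exp_ne_zero _
  have hodd (m : ℕ) : ∑ k ∈ range (2 * N), tq N ^ ((k + (2 * m + 1)) * k) = 0 := by
    rw [sum_range_two_mul_pow ht hev, (odd_two_mul_add_one m).neg_one_pow, add_neg_cancel,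
      zero_mul]
  have heven (m : ℕ) : ∑ k ∈ range (2 * N), tq N ^ ((k + 2 * m) * k)
      = 2 * (tq N ^ (m * m))⁻¹ * ∑ k ∈ range N, tq N ^ (k * k) := by
    rw [sum_range_two_mul_pow ht hev, (even_two_mul m).neg_one_pow, one_add_one_eq_two,
      ← pow_mul_sum_range_pow_add_two_mul ht hev m, mul_assoc,
      inv_mul_cancel_left₀ (pow_ne_zero _ ht0)]
  simp_rw [vel, ← sum_smul]
  rw [sum_range_two_mul]
  simp_rw [hodd, heven, zero_smul, add_zero, smul_sum, smul_smul]
  refine sum_congr rfl fun m _ => ?_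
  congr 1
  field_simp

lemma sum_range_inv_pow_smul_KK_eq {M : ℕ} {t : ℂ} (ht : t ^ (M + M) = -1) :
    ∑ m ∈ range (M + M), (t ^ (m * m))⁻¹ • KK (M + M) ((2 * m : ℕ) : ZMod (2 * (M + M)))
      = (t ^ (M * M))⁻¹ • ∑ j ∈ range (M + M), ((-1 : ℂ) ^ j * t ^ (-((j : ℤ) ^ 2))) •
          KK (M + M) ((2 * j + (M + M) : ℕ) : ZMod (2 * (M + M))) := by
  have hper : Function.Periodic
      (fun m : ℕ => (t ^ (m * m))⁻¹ • KK (M + M) ((2 * m : ℕ) : ZMod (2 * (M + M)))) (M + M) :=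
    fun m => by
      have hsq : t ^ ((m + (M + M)) * (m + (M + M))) = t ^ (m * m) :=
        periodic_pow_mul_self ht ⟨M, rfl⟩ m
      dsimp only
      rw [hsq, show 2 * (m + (M + M)) = 2 * m + 2 * (M + M) by ring, Nat.cast_add,
        ZMod.natCast_self, add_zero]
  rw [← hper.sum_range_add_right M, smul_sum]
  refine sum_congr rfl fun j _ => ?_
  rw [pow_add_half_period_mul_self ht, smul_smul, show 2 * (j + M) = 2 * j + (M + M) by ring]
  congr 1
  rw [mul_inv, mul_inv, ← inv_pow (-1 : ℂ), inv_neg_one, zpow_neg, ← Nat.cast_pow, zpow_natCast]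

/-- In `A` one has `v = (1/N)·(Σ_{k=0}^{N−1} (−1)^k t^{k²})·(Σ_{j=0}^{N−1} (−1)^j t^{−j²} K^{2j+N})`. -/
theorem stmt_12 (N : ℕ) (hpos : 0 < N) (hN : Even N) :
    vel N
      = ((N : ℂ)⁻¹ * ∑ k ∈ Finset.range N, (-1 : ℂ) ^ k * tq N ^ (k ^ 2)) •
          ∑ j ∈ Finset.range N, ((-1 : ℂ) ^ j * tq N ^ (-((j : ℤ) ^ 2))) •
            KK N ((2 * j + N : ℕ) : ZMod (2 * N)) := by
  obtain ⟨M, rfl⟩ := hN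
  have ht := tq_pow_self hpos.ne'
  have ht0 : tq (M + M) ^ (M * M) ≠ 0 := pow_ne_zero _ (Complex.exp_ne_zero _)
  rw [vel_eq_smul_sum_even hpos.ne' ⟨M, rfl⟩, sum_range_pow_mul_self_eq_pow_mul_sum ht,
    sum_range_inv_pow_smul_KK_eq ht, smul_smul]
  congr 1
  field_simp
end
end

section
/- The Gauss sums G₊ = Σ_{k=0}^{N−1} (−1)^k t^{k²} and G₋ = Σ_{k=0}^{N−1} (−1)^k t^{−k²} satisfy G₊·G₋ = N. -/
/-!
With `t ^ N = -1`, the `k`-th term of `G₊` is `a k = t ^ (k ^ 2 + N k)`, that of `G₋` is `(a k)⁻¹`,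
and `a` is `N`-periodic. So `G₊ G₋ = ∑_k ∑_j a (j + k) / a k`, and `a (j + k) / a k = a j ζ ^ (j k)`
with `ζ = t ^ 2` a primitive `N`-th root of unity: summing over `k` first kills every `j ≠ 0` by
orthogonality and leaves `N a 0 = N`.
-/

open Finset

noncomputable section

theorem Function.Periodic.sum_range_add {M : Type*} [AddCommMonoid M] {f : ℕ → M} {N : ℕ}
    (hf : Function.Periodic f N) (k : ℕ) :
    ∑ j ∈ range N, f (j + k) = ∑ j ∈ range N, f j :=
  calc ∑ j ∈ range N, f (j + k)
      = ∑ i ∈ Ico k (k + N), f (i % N) := by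
        rw [← Nat.Ico_zero_eq_range, sum_Ico_add', zero_add, add_comm N k]
        exact sum_congr rfl fun i _ => (hf.map_mod_nat i).symm
    _ = ∑ j ∈ range N, f j := by
        rw [← Nat.image_Ico_mod k N, sum_image (Nat.mod_injOn_Ico k N)]

theorem IsPrimitiveRoot.sum_range_pow_pow {R : Type*} [CommRing R] [IsDomain R] {ζ : R}
    {N j : ℕ} (hζ : IsPrimitiveRoot ζ N) (hj : j < N) :
    ∑ k ∈ range N, (ζ ^ j) ^ k = if j = 0 then (N : R) else 0 := by
  split_ifs with hj0
  · simp [hj0]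
  · have hne : ζ ^ j - 1 ≠ 0 := sub_ne_zero.mpr (hζ.pow_ne_one_of_pos_of_lt hj0 hj)
    have hroot : (ζ ^ j) ^ N = 1 := by rw [← pow_mul, mul_comm, pow_mul, hζ.pow_eq_one, one_pow]
    refine (mul_eq_zero.mp ?_).resolve_right hne
    rw [geom_sum_mul, hroot, sub_self]

section GaussSum

variable {K : Type*} [Field K] {t : K} {N : ℕ}

theorem neg_one_pow_mul_pow_sq (htN : t ^ N = -1) (k : ℕ) :
    (-1 : K) ^ k * t ^ (k ^ 2) = t ^ (k ^ 2 + N * k) := by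
  rw [pow_add, pow_mul, htN, mul_comm]

theorem neg_one_pow_mul_zpow_neg_sq (htN : t ^ N = -1) (k : ℕ) :
    (-1 : K) ^ k * t ^ (-((k : ℤ) ^ 2)) = (t ^ (k ^ 2 + N * k))⁻¹ := by
  rw [← neg_one_pow_mul_pow_sq htN, mul_inv, ← inv_pow, inv_neg_one, zpow_neg]
  norm_cast

theorem periodic_pow_sq_add_mul (ht : t ^ (2 * N) = 1) :
    Function.Periodic (fun k : ℕ => t ^ (k ^ 2 + N * k)) N := fun k => by
  dsimp only
  rw [show (k + N) ^ 2 + N * (k + N) = k ^ 2 + N * k + 2 * N * (k + N) by ring,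
    pow_add, pow_mul, ht, one_pow, mul_one]

theorem pow_add_sq_add_mul (j k : ℕ) :
    t ^ ((j + k) ^ 2 + N * (j + k)) =
      t ^ (j ^ 2 + N * j) * ((t ^ 2) ^ j) ^ k * t ^ (k ^ 2 + N * k) := by
  rw [← pow_mul, ← pow_mul, ← pow_add, ← pow_add]
  ring_nf

theorem IsPrimitiveRoot.sum_neg_one_pow_mul_pow_sq_mul (ht : IsPrimitiveRoot t (2 * N)) :
    (∑ k ∈ range N, (-1 : K) ^ k * t ^ (k ^ 2)) *
      (∑ k ∈ range N, (-1 : K) ^ k * t ^ (-((k : ℤ) ^ 2))) = N := by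
  rcases N.eq_zero_or_pos with rfl | hN
  · simp
  have htN : t ^ N = -1 := (ht.pow (by lia) (mul_comm 2 N)).eq_neg_one_of_two_right
  have hζ : IsPrimitiveRoot (t ^ 2) N := ht.pow (by lia) rfl
  have ht0 : t ≠ 0 := ht.ne_zero (by lia)
  set a : ℕ → K := fun k => t ^ (k ^ 2 + N * k)
  calc (∑ k ∈ range N, (-1 : K) ^ k * t ^ (k ^ 2)) *
        (∑ k ∈ range N, (-1 : K) ^ k * t ^ (-((k : ℤ) ^ 2)))
      = (∑ j ∈ range N, a j) * ∑ k ∈ range N, (a k)⁻¹ := by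
        simp only [neg_one_pow_mul_pow_sq htN, neg_one_pow_mul_zpow_neg_sq htN, a]
    _ = ∑ k ∈ range N, ∑ j ∈ range N, a (j + k) * (a k)⁻¹ := by
        rw [mul_sum]
        refine sum_congr rfl fun k _ => ?_
        rw [← sum_mul, (periodic_pow_sq_add_mul ht.pow_eq_one).sum_range_add, mul_comm]
    _ = ∑ j ∈ range N, a j * ∑ k ∈ range N, ((t ^ 2) ^ j) ^ k := by
        rw [sum_comm]
        refine sum_congr rfl fun j _ => ?_
        simp only [a, pow_add_sq_add_mul, mul_inv_cancel_right₀ (pow_ne_zero _ ht0), mul_sum]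
    _ = N := by
        rw [sum_congr rfl fun j hj => by rw [hζ.sum_range_pow_pow (mem_range.mp hj)]]
        simp [hN, a]

end GaussSum

theorem stmt_13_general (N : ℕ) :
    (∑ k ∈ Finset.range N, (-1 : ℂ) ^ k * tq N ^ (k ^ 2)) *
      (∑ k ∈ Finset.range N, (-1 : ℂ) ^ k * tq N ^ (-((k : ℤ) ^ 2)))
      = (N : ℂ) := by
  rcases N.eq_zero_or_pos with rfl | hN
  · simp
  have htq : tq N = Complex.exp (2 * Real.pi * Complex.I / (2 * N : ℕ)) := by
    rw [tq]
    congr 1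
    push_cast
    field_simp
  exact htq ▸ (Complex.isPrimitiveRoot_exp _ (by lia)).sum_neg_one_pow_mul_pow_sq_mul

/-- The Gauss sums `G₊ = Σ_{k=0}^{N−1} (−1)^k t^{k²}` and `G₋ = Σ_{k=0}^{N−1} (−1)^k t^{−k²}`
satisfy `G₊·G₋ = N`. -/
theorem stmt_13 (N : ℕ) (hpos : 0 < N) (hN : Even N) :
    (∑ k ∈ Finset.range N, (-1 : ℂ) ^ k * tq N ^ (k ^ 2)) *
      (∑ k ∈ Finset.range N, (-1 : ℂ) ^ k * tq N ^ (-((k : ℤ) ^ 2)))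
      = (N : ℂ) :=
  stmt_13_general N
end
end

section
/- For every k ∈ ℤ_{2N}, applying to v the algebra character A → ℂ determined by K ↦ t^k yields t^{k²}; equivalently, (1/(2N)) Σ_{j,l ∈ ℤ_{2N}} t^{(l+j)l} t^{jk} = t^{k²}. (This says that v acts on the one-dimensional irreducible representation V^k of A as multiplication by t^{k²}.) -/
open Finset TensorProduct

noncomputable section

/-!
Since `(l + j) l + j k = l² + j (l + k)`, the sum over `j` is `t^{l²}` times a geometric sum in
`t^{l + k}`, which vanishes unless `l ≡ -k (mod 2N)` and is `2N` otherwise. Exactly one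
`l ∈ [0, 2N)` survives, and for it `t^{l²} = t^{k²}` because `2N ∣ (l + k)(l - k)`.
-/

theorem isPrimitiveRoot_tq {N : ℕ} (hN : N ≠ 0) : IsPrimitiveRoot (tq N) (2 * N) := by
  rw [tq]
  convert Complex.isPrimitiveRoot_exp (2 * N) (by positivity) using 2
  push_cast
  field_simp

theorem Finset.card_filter_range_dvd_add {n : ℕ} (hn : 0 < n) (k : ℤ) :
    #{l ∈ range n | (n : ℤ) ∣ ((l : ℕ) : ℤ) + k} = 1 := by
  have hn' : (0 : ℤ) < n := by exact_mod_cast hn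
  have h0 := Int.emod_nonneg (-k) hn'.ne'
  have h1 := Int.emod_lt_of_pos (-k) hn'
  rw [card_eq_one]
  refine ⟨((-k) % n).toNat, eq_singleton_iff_unique_mem.2 ⟨?_, fun l hl ↦ ?_⟩⟩
  · rw [mem_filter, mem_range, Int.toNat_of_nonneg h0, ← sub_neg_eq_add]
    exact ⟨by omega, (Int.mod_modEq (-k) n).symm.dvd⟩
  · rw [mem_filter, mem_range, ← sub_neg_eq_add] at hl
    have hmod : (-k) % n = l := by
      rw [Int.modEq_of_dvd hl.2, Int.emod_eq_of_lt (by positivity) (by exact_mod_cast hl.1)]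
    omega

namespace IsPrimitiveRoot

variable {K : Type*} [Field K] {ζ : K} {n : ℕ}

theorem sum_range_zpow_mul (hζ : IsPrimitiveRoot ζ n) (m : ℤ) :
    ∑ j ∈ range n, ζ ^ ((j : ℤ) * m) = if (n : ℤ) ∣ m then (n : K) else 0 := by
  simp_rw [mul_comm _ m, zpow_mul, zpow_natCast]
  split_ifs with h
  · simp [(hζ.zpow_eq_one_iff_dvd m).2 h]
  · have hpow : (ζ ^ m) ^ n = 1 := by
      rw [← zpow_natCast, ← zpow_mul, mul_comm, zpow_mul, zpow_natCast, hζ.pow_eq_one,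
        one_zpow]
    rw [geom_sum_eq ((hζ.zpow_eq_one_iff_dvd m).not.2 h), hpow, sub_self, zero_div]

theorem zpow_sq_eq_of_dvd_add (hζ : IsPrimitiveRoot ζ n) (hn : 0 < n) {a b : ℤ}
    (h : (n : ℤ) ∣ a + b) : ζ ^ (a ^ 2) = ζ ^ (b ^ 2) := by
  have hsq : (n : ℤ) ∣ a ^ 2 - b ^ 2 := by
    rw [sq_sub_sq]
    exact h.mul_right _
  rw [← sub_add_cancel (a ^ 2) (b ^ 2), zpow_add₀ (hζ.ne_zero hn.ne'),
    (hζ.zpow_eq_one_iff_dvd _).2 hsq, one_mul]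

theorem sum_range_twist (hζ : IsPrimitiveRoot ζ n) (hn : 0 < n) (l k : ℤ) :
    ∑ j ∈ range n, ζ ^ ((l + j) * l) * ζ ^ ((j : ℤ) * k)
      = if (n : ℤ) ∣ l + k then n * ζ ^ (k ^ 2) else 0 := by
  have hζ0 := hζ.ne_zero hn.ne'
  have hexp (j : ℕ) :
      ζ ^ ((l + j) * l) * ζ ^ ((j : ℤ) * k) = ζ ^ (l ^ 2) * ζ ^ ((j : ℤ) * (l + k)) := by
    rw [← zpow_add₀ hζ0, ← zpow_add₀ hζ0]
    congr 1
    ring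
  simp_rw [hexp, ← mul_sum, hζ.sum_range_zpow_mul]
  split_ifs with h
  · rw [hζ.zpow_sq_eq_of_dvd_add hn h, mul_comm]
  · rw [mul_zero]

theorem sum_range_sum_range_twist (hζ : IsPrimitiveRoot ζ n) (hn : 0 < n) (k : ℤ) :
    ∑ j ∈ range n, ∑ l ∈ range n, ζ ^ (((l : ℤ) + j) * l) * ζ ^ ((j : ℤ) * k)
      = n * ζ ^ (k ^ 2) := by
  rw [sum_comm]
  simp_rw [hζ.sum_range_twist hn]
  rw [← sum_filter, sum_const, card_filter_range_dvd_add hn, one_smul]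

end IsPrimitiveRoot

theorem stmt_14_general (N : ℕ) (hpos : 0 < N) (k : ℤ) :
    (2 * (N : ℂ))⁻¹ * ∑ j ∈ Finset.range (2 * N), ∑ l ∈ Finset.range (2 * N),
        tq N ^ (((l : ℤ) + (j : ℤ)) * (l : ℤ)) * tq N ^ ((j : ℤ) * k)
      = tq N ^ (k ^ 2) := by
  rw [(isPrimitiveRoot_tq hpos.ne').sum_range_sum_range_twist (by positivity), Nat.cast_mul,
    Nat.cast_two, inv_mul_cancel_left₀ (mul_ne_zero two_ne_zero (Nat.cast_ne_zero.2 hpos.ne'))]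

/-- The twist `v` acts on `V^k` as multiplication by `t^{k²}`: applying the character
`K ↦ t^k` to `v` yields `t^{k²}`; equivalently,
`(1/2N) Σ_{j,l ∈ ℤ_{2N}} t^{(l+j)l} t^{jk} = t^{k²}` (for every integer choice of the
exponent `k`, which is equivalent since `t^{2N} = 1`). -/
theorem stmt_14 (N : ℕ) (hpos : 0 < N) (hN : Even N) (k : ℤ) :
    (2 * (N : ℂ))⁻¹ * ∑ j ∈ Finset.range (2 * N), ∑ l ∈ Finset.range (2 * N),
        tq N ^ (((l : ℤ) + (j : ℤ)) * (l : ℤ)) * tq N ^ ((j : ℤ) * k)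
      = tq N ^ (k ^ 2) :=
  stmt_14_general N hpos k
end
end
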